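/- The normalized surface area of a spherical cap satisfies, for fixed θ ∈ (0, π/2), s_d(θ) · sqrt(2πd) · cos θ / sin^{d−1}θ → 1 as d → ∞. -/

import Mathlib

open Real Filter

lemma aux_tendsto_add_div (a b : ℝ) :
    Tendsto (fun d : ℕ => ((d : ℝ) + a) / ((d : ℝ) + b)) atTop (nhds 1) := by
  have hb : Tendsto (fun d : ℕ => (d : ℝ) + b) atTop atTop :=
    tendsto_atTop_add_const_right _ b tendsto_natCast_atTop_atTop
  have h0 : Tendsto (fun d : ℕ => ((d : ℝ) + b)⁻¹) atTop (nhds 0) := hb.inv_tendsto_atTop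
  have h1 : Tendsto (fun d : ℕ => 1 + (a - b) * ((d : ℝ) + b)⁻¹) atTop (nhds (1 + (a - b) * 0)) :=
    tendsto_const_nhds.add (tendsto_const_nhds.mul h0)
  rw [mul_zero, add_zero] at h1
  refine h1.congr' ?_
  filter_upwards [hb.eventually_gt_atTop 0] with d hd
  field_simp
  ring

lemma aux_gamma_mid_sq {a b : ℝ} (ha : 0 < a) (hb : 0 < b) :
    Gamma ((a + b) / 2) ^ 2 ≤ Gamma a * Gamma b := by
  have h := convexOn_log_Gamma.2 (Set.mem_Ioi.2 ha) (Set.mem_Ioi.2 hb)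
    (by norm_num : (0:ℝ) ≤ 1/2) (by norm_num : (0:ℝ) ≤ 1/2) (by norm_num)
  simp only [smul_eq_mul, Function.comp_apply] at h
  have hmid : (1/2 : ℝ) * a + (1/2 : ℝ) * b = (a + b) / 2 := by ring
  rw [hmid] at h
  have hga := Gamma_pos_of_pos ha
  have hgb := Gamma_pos_of_pos hb
  have hgm := Gamma_pos_of_pos (by positivity : (0:ℝ) < (a + b)/2)
  have h2 : 2 * Real.log (Gamma ((a+b)/2)) ≤ Real.log (Gamma a * Gamma b) := by
    rw [Real.log_mul hga.ne' hgb.ne']; linarith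
  have h3 : (2:ℝ) * Real.log (Gamma ((a+b)/2)) = Real.log (Gamma ((a+b)/2) ^ 2) := by
    rw [Real.log_pow]; norm_num
  rw [h3] at h2
  calc Gamma ((a+b)/2) ^ 2 = Real.exp (Real.log (Gamma ((a+b)/2) ^ 2)) := by
        rw [Real.exp_log (by positivity)]
    _ ≤ Real.exp (Real.log (Gamma a * Gamma b)) := Real.exp_le_exp.2 h2
    _ = Gamma a * Gamma b := Real.exp_log (by positivity)
lemma aux_gamma_ratio {x : ℝ} (hx : 3 ≤ x) :
    Real.sqrt ((x - 2) / 2) ≤ Gamma (x / 2) / Gamma ((x - 1) / 2) ∧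
      Gamma (x / 2) / Gamma ((x - 1) / 2) ≤ Real.sqrt ((x - 1) / 2) := by
  have h2 : (0:ℝ) < (x - 2) / 2 := by linarith
  have h1 : (0:ℝ) < (x - 1) / 2 := by linarith
  have h0 : (0:ℝ) < x / 2 := by linarith
  have p2 := Gamma_pos_of_pos h2
  have p1 := Gamma_pos_of_pos h1
  have p0 := Gamma_pos_of_pos h0
  have step1 : Gamma (x / 2) = (x - 2) / 2 * Gamma ((x - 2) / 2) := by
    have e : x / 2 = (x - 2) / 2 + 1 := by ring
    rw [e, Gamma_add_one h2.ne']
  have step2 : Gamma ((x + 1) / 2) = (x - 1) / 2 * Gamma ((x - 1) / 2) := by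
    have e : (x + 1) / 2 = (x - 1) / 2 + 1 := by ring
    rw [e, Gamma_add_one h1.ne']
  have c1 : Gamma ((x - 1) / 2) ^ 2 ≤ Gamma ((x - 2) / 2) * Gamma (x / 2) := by
    have := aux_gamma_mid_sq h2 h0
    rwa [show ((x - 2) / 2 + x / 2) / 2 = (x - 1) / 2 by ring] at this
  have c2 : Gamma (x / 2) ^ 2 ≤ Gamma ((x - 1) / 2) * Gamma ((x + 1) / 2) := by
    have := aux_gamma_mid_sq h1 (by linarith : (0:ℝ) < (x + 1) / 2)
    rwa [show ((x - 1) / 2 + (x + 1) / 2) / 2 = x / 2 by ring] at this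
  have hr : 0 < Gamma (x / 2) / Gamma ((x - 1) / 2) := by positivity
  constructor
  · have hle : (x - 2) / 2 ≤ (Gamma (x / 2) / Gamma ((x - 1) / 2)) ^ 2 := by
      rw [div_pow, le_div_iff₀ (by positivity)]
      nlinarith [mul_le_mul_of_nonneg_left c1 h2.le]
    calc Real.sqrt ((x - 2) / 2) ≤ Real.sqrt ((Gamma (x / 2) / Gamma ((x - 1) / 2)) ^ 2) :=
          Real.sqrt_le_sqrt hle
      _ = Gamma (x / 2) / Gamma ((x - 1) / 2) := Real.sqrt_sq hr.le
  · have hle : (Gamma (x / 2) / Gamma ((x - 1) / 2)) ^ 2 ≤ (x - 1) / 2 := by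
      rw [div_pow, div_le_iff₀ (by positivity)]
      nlinarith [c2]
    calc Gamma (x / 2) / Gamma ((x - 1) / 2)
        = Real.sqrt ((Gamma (x / 2) / Gamma ((x - 1) / 2)) ^ 2) := (Real.sqrt_sq hr.le).symm
      _ ≤ Real.sqrt ((x - 1) / 2) := Real.sqrt_le_sqrt hle
lemma aux_sin_pow_cos_mono {θ : ℝ} (hθ : θ ∈ Set.Ioo 0 (π / 2)) (k : ℕ) (hk1 : 1 ≤ k)
    (hk : Real.sin θ ^ 2 ≤ (k : ℝ) * Real.cos θ ^ 2) :
    ∀ x ∈ Set.Icc (0:ℝ) θ, Real.sin x ^ k * Real.cos x ≤ Real.sin θ ^ k * Real.cos θ := by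
  have hmono : MonotoneOn (fun x => Real.sin x ^ k * Real.cos x) (Set.Icc 0 θ) := by
    apply monotoneOn_of_hasDerivWithinAt_nonneg (f' := fun x =>
      (k : ℝ) * Real.sin x ^ (k - 1) * Real.cos x * Real.cos x + Real.sin x ^ k * (-Real.sin x))
      (convex_Icc 0 θ)
    · exact (Continuous.continuousOn (by fun_prop))
    · intro x hx
      exact (((Real.hasDerivAt_sin x).pow k).mul (Real.hasDerivAt_cos x)).hasDerivWithinAt
    · intro x hx
      rw [interior_Icc] at hx
      have hx0 : 0 < x := hx.1
      have hxθ : x < θ := hx.2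
      have hsx : 0 ≤ Real.sin x := Real.sin_nonneg_of_nonneg_of_le_pi hx0.le
        (by nlinarith [Real.pi_pos, hθ.2])
      have hss : Real.sin x ≤ Real.sin θ := by
        apply Real.strictMonoOn_sin.monotoneOn ?_ ?_ hxθ.le
        · constructor <;> nlinarith [Real.pi_pos, hθ.1, hθ.2]
        · constructor <;> nlinarith [Real.pi_pos, hθ.1, hθ.2]
      have hcc : Real.cos θ ≤ Real.cos x := by
        apply Real.strictAntiOn_cos.antitoneOn ?_ ?_ hxθ.le
        · constructor <;> nlinarith [Real.pi_pos, hθ.1, hθ.2]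
        · constructor <;> nlinarith [Real.pi_pos, hθ.1, hθ.2]
      have hcθ : 0 < Real.cos θ := Real.cos_pos_of_mem_Ioo ⟨by nlinarith [Real.pi_pos, hθ.1], hθ.2⟩
      have hA : Real.sin x ^ 2 ≤ Real.sin θ ^ 2 := pow_le_pow_left₀ hsx hss 2
      have hB : Real.cos θ ^ 2 ≤ Real.cos x ^ 2 := pow_le_pow_left₀ hcθ.le hcc 2
      have hk0 : (0:ℝ) ≤ (k : ℝ) := Nat.cast_nonneg k
      have h1 : Real.sin x ^ 2 ≤ (k : ℝ) * Real.cos x ^ 2 := by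
        nlinarith [mul_le_mul_of_nonneg_left hB hk0]
      have e : Real.sin x ^ k = Real.sin x ^ (k - 1) * Real.sin x := by
        rw [← pow_succ, Nat.sub_add_cancel hk1]
      rw [e]
      have hp : (0:ℝ) ≤ Real.sin x ^ (k - 1) := pow_nonneg hsx _
      nlinarith [mul_le_mul_of_nonneg_left h1 hp]
  intro x hx
  exact hmono hx (Set.right_mem_Icc.2 hθ.1.le) hx.2
lemma aux_J {θ : ℝ} (m : ℕ) :
    (∫ x in (0:ℝ)..θ, Real.sin x ^ m * Real.cos x) = Real.sin θ ^ (m + 1) / ((m : ℝ) + 1) := by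
  have h := integral_sin_pow_mul_cos_pow_odd (a := (0:ℝ)) (b := θ) m 0
  simp only [mul_zero, zero_add, pow_one, pow_zero, mul_one, Real.sin_zero] at h
  rw [h, integral_pow]
  simp

lemma aux_sin_nonneg {θ : ℝ} (hθ : θ ∈ Set.Ioo 0 (π / 2)) :
    ∀ x ∈ Set.Icc (0:ℝ) θ, 0 ≤ Real.sin x := by
  intro x hx
  exact Real.sin_nonneg_of_nonneg_of_le_pi hx.1 (by nlinarith [Real.pi_pos, hθ.2, hx.2])

lemma aux_cos_ge {θ : ℝ} (hθ : θ ∈ Set.Ioo 0 (π / 2)) :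
    ∀ x ∈ Set.Icc (0:ℝ) θ, Real.cos θ ≤ Real.cos x := by
  intro x hx
  apply Real.strictAntiOn_cos.antitoneOn ?_ ?_ hx.2
  · constructor
    · exact hx.1
    · nlinarith [Real.pi_pos, hθ.2, hx.2]
  · constructor
    · exact hθ.1.le
    · nlinarith [Real.pi_pos, hθ.2]

lemma aux_integral_upper {θ : ℝ} (hθ : θ ∈ Set.Ioo 0 (π / 2)) (n : ℕ) :
    (∫ x in (0:ℝ)..θ, Real.sin x ^ n) ≤
      Real.sin θ ^ (n + 1) / (((n : ℝ) + 1) * Real.cos θ) := by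
  have hc : 0 < Real.cos θ := Real.cos_pos_of_mem_Ioo ⟨by nlinarith [Real.pi_pos, hθ.1], hθ.2⟩
  have hmono : (∫ x in (0:ℝ)..θ, Real.sin x ^ n * Real.cos θ) ≤
      ∫ x in (0:ℝ)..θ, Real.sin x ^ n * Real.cos x := by
    refine intervalIntegral.integral_mono_on hθ.1.le ?_ ?_ ?_
    · exact Continuous.intervalIntegrable (by fun_prop) _ _
    · exact Continuous.intervalIntegrable (by fun_prop) _ _
    intro x hx
    exact mul_le_mul_of_nonneg_left (aux_cos_ge hθ x hx) (pow_nonneg (aux_sin_nonneg hθ x hx) n)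
  rw [intervalIntegral.integral_mul_const, aux_J n] at hmono
  rw [le_div_iff₀ (by positivity)]
  have h2 := (le_div_iff₀ (show (0:ℝ) < (n:ℝ) + 1 by positivity)).mp hmono
  nlinarith [h2]

lemma aux_integral_lower {θ : ℝ} (hθ : θ ∈ Set.Ioo 0 (π / 2)) (k n : ℕ) (hk1 : 1 ≤ k)
    (hk : Real.sin θ ^ 2 ≤ (k : ℝ) * Real.cos θ ^ 2) :
    Real.sin θ ^ (n + 1) / (((n : ℝ) + (k : ℝ) + 1) * Real.cos θ) ≤
      ∫ x in (0:ℝ)..θ, Real.sin x ^ n := by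
  have hc : 0 < Real.cos θ := Real.cos_pos_of_mem_Ioo ⟨by nlinarith [Real.pi_pos, hθ.1], hθ.2⟩
  have hs : 0 < Real.sin θ := Real.sin_pos_of_pos_of_lt_pi hθ.1 (by nlinarith [Real.pi_pos, hθ.2])
  have hmono : (∫ x in (0:ℝ)..θ, Real.sin x ^ (n + k) * Real.cos x) ≤
      ∫ x in (0:ℝ)..θ, Real.sin x ^ n * (Real.sin θ ^ k * Real.cos θ) := by
    refine intervalIntegral.integral_mono_on hθ.1.le ?_ ?_ ?_
    · exact Continuous.intervalIntegrable (by fun_prop) _ _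
    · exact Continuous.intervalIntegrable (by fun_prop) _ _
    intro x hx
    have h1 := aux_sin_pow_cos_mono hθ k hk1 hk x hx
    have h2 : Real.sin x ^ (n + k) * Real.cos x = Real.sin x ^ n * (Real.sin x ^ k * Real.cos x) := by
      rw [pow_add]; ring
    rw [h2]
    exact mul_le_mul_of_nonneg_left h1 (pow_nonneg (aux_sin_nonneg hθ x hx) n)
  rw [intervalIntegral.integral_mul_const, aux_J (n + k)] at hmono
  have hcast : ((n + k : ℕ) : ℝ) + 1 = (n : ℝ) + (k : ℝ) + 1 := by push_cast; ring
  rw [hcast] at hmono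
  have hpow : Real.sin θ ^ (n + k + 1) = Real.sin θ ^ (n + 1) * Real.sin θ ^ k := by
    rw [← pow_add]; ring_nf
  rw [hpow] at hmono
  rw [div_le_iff₀ (by positivity)]
  rw [div_le_iff₀ (by positivity)] at hmono
  have hsk : 0 < Real.sin θ ^ k := pow_pos hs k
  rw [← mul_le_mul_iff_of_pos_right hsk]
  calc Real.sin θ ^ (n + 1) * Real.sin θ ^ k
      ≤ (∫ x in (0:ℝ)..θ, Real.sin x ^ n) * (Real.sin θ ^ k * Real.cos θ) * ((n:ℝ) + (k:ℝ) + 1) := hmono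
    _ = (∫ x in (0:ℝ)..θ, Real.sin x ^ n) * (((n:ℝ) + (k:ℝ) + 1) * Real.cos θ) * Real.sin θ ^ k := by ring
lemma aux_alg {X A D c s' : ℝ} (hX : 0 ≤ X) (hA : 0 ≤ A) (hD : 0 < D) (hc : 0 < c)
    (hs : 0 < s') :
    1 / Real.sqrt π * Real.sqrt (A / 2) * (s' / (D * c)) * Real.sqrt (2 * π * X) * c / s'
      = Real.sqrt (X / D) * Real.sqrt (A / D) := by
  have hπ := Real.pi_pos
  have e1 : Real.sqrt (A / 2) * Real.sqrt (2 * π * X)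
      = Real.sqrt π * (Real.sqrt A * Real.sqrt X) := by
    rw [← Real.sqrt_mul (by positivity : (0:ℝ) ≤ A / 2),
      show A / 2 * (2 * π * X) = π * (A * X) by ring,
      Real.sqrt_mul hπ.le, Real.sqrt_mul hA]
  have e2 : Real.sqrt (X / D) * Real.sqrt (A / D) = Real.sqrt X * Real.sqrt A / D := by
    rw [Real.sqrt_div hX, Real.sqrt_div hA, div_mul_div_comm, Real.mul_self_sqrt hD.le]
  rw [e2]
  have hsp : (0:ℝ) < Real.sqrt π := Real.sqrt_pos.2 hπ
  calc 1 / Real.sqrt π * Real.sqrt (A / 2) * (s' / (D * c)) * Real.sqrt (2 * π * X) * c / s'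
      = (Real.sqrt (A / 2) * Real.sqrt (2 * π * X)) * (1 / Real.sqrt π) * (s' / (D * c)) * c / s' := by
        ring
    _ = (Real.sqrt π * (Real.sqrt A * Real.sqrt X)) * (1 / Real.sqrt π) * (s' / (D * c)) * c / s' := by
        rw [e1]
    _ = Real.sqrt X * Real.sqrt A / D := by
        field_simp

lemma aux_tendsto_sqrt_add_div (a b : ℝ) :
    Tendsto (fun d : ℕ => Real.sqrt (((d : ℝ) + a) / ((d : ℝ) + b))) atTop (nhds 1) := by
  have h := (aux_tendsto_add_div a b).sqrt
  simpa using h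

/-- The normalized surface area of a spherical cap of angular radius `θ` on the
unit sphere `S_{d−1}`: `s_d(θ) = (1/√π) (Γ(d/2)/Γ((d−1)/2)) ∫₀^θ sin^{d−2} x dx`. -/
noncomputable def capArea (d : ℕ) (θ : ℝ) : ℝ :=
  (1 / Real.sqrt π) * (Real.Gamma ((d : ℝ) / 2) / Real.Gamma (((d : ℝ) - 1) / 2)) *
    ∫ x in (0 : ℝ)..θ, Real.sin x ^ (d - 2)

/-- For fixed `θ ∈ (0, π/2)`, `s_d(θ) · √(2πd) · cos θ / sin^{d−1} θ → 1` as
`d → ∞`; i.e. `s_d(θ) = (1+o(1)) sin^{d−1}θ / (√(2πd) cos θ)`. -/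
theorem capArea_asymptotic (θ : ℝ) (hθ : θ ∈ Set.Ioo 0 (π / 2)) :
    Tendsto (fun d : ℕ =>
        capArea d θ * Real.sqrt (2 * π * d) * Real.cos θ / Real.sin θ ^ (d - 1))
      atTop (nhds 1) := by
  have hπ := Real.pi_pos
  have hc : 0 < Real.cos θ := Real.cos_pos_of_mem_Ioo ⟨by nlinarith [hθ.1], hθ.2⟩
  have hs : 0 < Real.sin θ := Real.sin_pos_of_pos_of_lt_pi hθ.1 (by nlinarith [hθ.2])
  set k : ℕ := ⌈(Real.sin θ / Real.cos θ) ^ 2⌉₊ + 1 with hkdef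
  have hk1 : 1 ≤ k := Nat.le_add_left 1 _
  have hk : Real.sin θ ^ 2 ≤ (k : ℝ) * Real.cos θ ^ 2 := by
    have h1 : ((Real.sin θ / Real.cos θ) ^ 2 : ℝ) ≤ (⌈(Real.sin θ / Real.cos θ) ^ 2⌉₊ : ℝ) :=
      Nat.le_ceil _
    have h2 : ((⌈(Real.sin θ / Real.cos θ) ^ 2⌉₊ : ℕ) : ℝ) ≤ (k : ℝ) := by
      rw [hkdef]; push_cast; linarith
    rw [div_pow] at h1 h2
    rw [div_le_iff₀ (by positivity)] at h1
    nlinarith [mul_le_mul_of_nonneg_right h2 (sq_nonneg (Real.cos θ))]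
  set K : ℝ := (k : ℝ) - 1 with hKdef
  have hK0 : 0 ≤ K := by
    have : (1 : ℝ) ≤ (k : ℝ) := by exact_mod_cast hk1
    simp [hKdef]; linarith
  have hL : Tendsto (fun d : ℕ => Real.sqrt (((d:ℝ) + 0) / ((d:ℝ) + K)) *
      Real.sqrt (((d:ℝ) + (-2)) / ((d:ℝ) + K))) atTop (nhds 1) := by
    simpa using (aux_tendsto_sqrt_add_div 0 K).mul (aux_tendsto_sqrt_add_div (-2) K)
  have hU : Tendsto (fun d : ℕ => Real.sqrt (((d:ℝ) + 0) / ((d:ℝ) + (-1))) *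
      Real.sqrt (((d:ℝ) + (-1)) / ((d:ℝ) + (-1)))) atTop (nhds 1) := by
    simpa using (aux_tendsto_sqrt_add_div 0 (-1)).mul (aux_tendsto_sqrt_add_div (-1) (-1))
  refine tendsto_of_tendsto_of_tendsto_of_le_of_le' hL hU ?_ ?_
  · -- lower bound
    filter_upwards [eventually_ge_atTop 3] with d hd
    have hX3 : (3 : ℝ) ≤ (d : ℝ) := by exact_mod_cast hd
    have hXK : (0 : ℝ) < (d : ℝ) + K := by linarith
    have hsd : (0 : ℝ) < Real.sin θ ^ (d - 1) := pow_pos hs _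
    have hgam := (aux_gamma_ratio hX3).1
    have hint := aux_integral_lower hθ k (d - 2) hk1 hk
    rw [show d - 2 + 1 = d - 1 from by omega] at hint
    have hcast : ((d - 2 : ℕ) : ℝ) = (d : ℝ) - 2 := by
      rw [Nat.cast_sub (by omega)]; norm_num
    rw [hcast] at hint
    rw [show ((d : ℝ) - 2 + (k : ℝ) + 1) = (d : ℝ) + K from by rw [hKdef]; ring] at hint
    rw [show ((d:ℝ) + 0) = (d:ℝ) from by ring, show ((d:ℝ) + (-2)) = (d:ℝ) - 2 from by ring]
    rw [← aux_alg (by linarith : (0:ℝ) ≤ (d:ℝ)) (by linarith : (0:ℝ) ≤ (d:ℝ) - 2) hXK hc hsd]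
    rw [capArea]
    have hg1 : 0 < Real.Gamma ((d:ℝ) / 2) := Real.Gamma_pos_of_pos (by linarith)
    have hg2 : 0 < Real.Gamma (((d:ℝ) - 1) / 2) := Real.Gamma_pos_of_pos (by linarith)
    have hI0 : 0 ≤ ∫ x in (0:ℝ)..θ, Real.sin x ^ (d - 2) :=
      intervalIntegral.integral_nonneg hθ.1.le fun x hx => pow_nonneg (aux_sin_nonneg hθ x hx) _
    gcongr
  · -- upper bound
    filter_upwards [eventually_ge_atTop 3] with d hd
    have hX3 : (3 : ℝ) ≤ (d : ℝ) := by exact_mod_cast hd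
    have hX1 : (0 : ℝ) < (d : ℝ) - 1 := by linarith
    have hsd : (0 : ℝ) < Real.sin θ ^ (d - 1) := pow_pos hs _
    have hgam := (aux_gamma_ratio hX3).2
    have hint := aux_integral_upper hθ (d - 2)
    rw [show d - 2 + 1 = d - 1 from by omega] at hint
    have hcast : ((d - 2 : ℕ) : ℝ) = (d : ℝ) - 2 := by
      rw [Nat.cast_sub (by omega)]; norm_num
    rw [hcast] at hint
    rw [show ((d : ℝ) - 2 + 1) = (d : ℝ) - 1 from by ring] at hint
    rw [show ((d:ℝ) + 0) = (d:ℝ) from by ring, show ((d:ℝ) + (-1)) = (d:ℝ) - 1 from by ring]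
    rw [← aux_alg (by linarith : (0:ℝ) ≤ (d:ℝ)) (by linarith : (0:ℝ) ≤ (d:ℝ) - 1) hX1 hc hsd]
    rw [capArea]
    have hg1 : 0 < Real.Gamma ((d:ℝ) / 2) := Real.Gamma_pos_of_pos (by linarith)
    have hg2 : 0 < Real.Gamma (((d:ℝ) - 1) / 2) := Real.Gamma_pos_of_pos (by linarith)
    have hI0 : 0 ≤ ∫ x in (0:ℝ)..θ, Real.sin x ^ (d - 2) :=
      intervalIntegral.integral_nonneg hθ.1.le fun x hx => pow_nonneg (aux_sin_nonneg hθ x hx) _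
    gcongr
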